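/- arXiv:1307.5919 — 2 statements merged into one kernel-verified Lean document; each statement's English description precedes it below -/
import Mathlib

section
/- For any finite graph H without isolated vertices and every integer k ≥ 3, hom(C_k, H)^{1/k} ≤ max{hom(C_3, H)^{1/3}, hom(C_4, H)^{1/4}}. -/
open Finset

/-- Number of graph homomorphisms from the (loopless or looped) graph given by
relation `G` on `U` to the graph given by relation `H` on `V`. -/
def HomCount {U V : Type*} [Fintype U] [DecidableEq U] [Fintype V] [DecidableEq V]
    (G : U → U → Prop) [DecidableRel G] (H : V → V → Prop) [DecidableRel H] : ℕ :=
  Fintype.card {f : U → V // ∀ a b, G a b → H (f a) (f b)}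

/-- Degree of a vertex in a graph with loops (a loop counts once). -/
def hdeg {V : Type*} [Fintype V] (H : V → V → Prop) [DecidableRel H] (v : V) : ℕ :=
  (Finset.univ.filter (H v)).card

/-- Adjacency matrix (over ℝ) of the graph with loops given by `H`. -/
def adjMat {V : Type*} [Fintype V] (H : V → V → Prop) [DecidableRel H] : Matrix V V ℝ :=
  fun i j => if H i j then 1 else 0

/-- Adjacency relation of the cycle `C_k` on vertex set `Fin k` (for `k ≥ 3`). -/
def cycAdj (k : ℕ) (i j : Fin k) : Prop :=
  (i.val + 1) % k = j.val ∨ (j.val + 1) % k = i.val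

instance (k : ℕ) : DecidableRel (cycAdj k) := fun i j => by
  unfold cycAdj; infer_instance

/-- Adjacency relation of the path `P_k` on vertex set `Fin k`. -/
def pathAdj (k : ℕ) (i j : Fin k) : Prop :=
  i.val + 1 = j.val ∨ j.val + 1 = i.val

instance (k : ℕ) : DecidableRel (pathAdj k) := fun i j => by
  unfold pathAdj; infer_instance

/-- Adjacency relation of the star `K_{1,x-1}` on `Fin x`, with center `0`. -/
def starAdj (x : ℕ) (i j : Fin x) : Prop :=
  (i.val = 0 ∧ j.val ≠ 0) ∨ (j.val = 0 ∧ i.val ≠ 0)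

instance (x : ℕ) : DecidableRel (starAdj x) := fun i j => by
  unfold starAdj; infer_instance

/-!
Since `H` is symmetric, `hom(C_k, H) = tr A^k = ∑ λᵢ^k` for the real eigenvalues `λᵢ` of the
adjacency matrix `A`. For `k ≥ 4` every `|λᵢ|` is at most `(∑ λⱼ⁴)^{1/4} = hom(C_4, H)^{1/4}`, so
`∑ λᵢ^k ≤ hom(C_4, H)^{(k-4)/4} ∑ λᵢ⁴ = hom(C_4, H)^{k/4}`; the case `k = 3` is trivial.
-/

open Matrix

section WalkExpansion

variable {V R : Type*} [Fintype V] [DecidableEq V] [CommSemiring R]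

/-- `Fin.cons u g` is the walk `u, g 0, …, g (k - 1)`. -/
theorem Matrix.pow_apply_eq_sum_prod_cons (A : Matrix V V R) (k : ℕ) (u v : V) :
    (A ^ k) u v = ∑ g : Fin k → V,
      if (Fin.cons u g : Fin (k + 1) → V) (Fin.last k) = v then
        ∏ i, A ((Fin.cons u g : Fin (k + 1) → V) i.castSucc) (g i) else 0 := by
  induction k generalizing u with
  | zero => simp [one_apply]
  | succ k ih =>
    rw [pow_succ', mul_apply, ← (Fin.consEquiv fun _ => V).sum_comp, Fintype.sum_prod_type]
    refine Finset.sum_congr rfl fun w _ => ?_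
    rw [ih, Finset.mul_sum]
    refine Finset.sum_congr rfl fun g _ => ?_
    simp [Fin.consEquiv, Fin.prod_univ_succ, ← Fin.succ_last, mul_ite]

theorem Matrix.trace_pow_succ_eq_sum_prod (A : Matrix V V R) (m : ℕ) :
    (A ^ (m + 1)).trace = ∑ g : Fin (m + 1) → V, ∏ i, A (g i) (g (i + 1)) := by
  simp only [trace, diag_apply, pow_apply_eq_sum_prod_cons]
  rw [Finset.sum_comm]
  refine Finset.sum_congr rfl fun g _ => ?_
  simp only [← Fin.succ_last, Fin.cons_succ, Finset.sum_ite_eq, Finset.mem_univ, if_true]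
  conv_lhs => rw [Fin.prod_univ_succ]
  conv_rhs => rw [Fin.prod_univ_castSucc, mul_comm]
  simp [Fin.coeSucc_eq_succ]

end WalkExpansion

theorem Matrix.IsHermitian.trace_pow_eq_sum_eigenvalues_pow {V 𝕜 : Type*} [Fintype V]
    [DecidableEq V] [RCLike 𝕜] {A : Matrix V V 𝕜} (hA : A.IsHermitian) (k : ℕ) :
    (A ^ k).trace = ∑ i, (hA.eigenvalues i : 𝕜) ^ k := by
  conv_lhs => rw [hA.spectral_theorem, ← map_pow, Unitary.conjStarAlgAut_apply, trace_mul_cycle,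
    Unitary.coe_star_mul_self, one_mul, diagonal_pow, trace_diagonal]
  simp

theorem sum_pow_le_sum_pow_rpow_inv_pow {ι : Type*} [Fintype ι] (x : ι → ℝ) {p n : ℕ}
    (hp : Even p) (hp0 : p ≠ 0) (hpn : p ≤ n) :
    ∑ i, x i ^ n ≤ ((∑ i, x i ^ p) ^ (p : ℝ)⁻¹) ^ n := by
  set M := (∑ i, x i ^ p) ^ (p : ℝ)⁻¹
  have hsum : 0 ≤ ∑ i, x i ^ p := Finset.sum_nonneg fun i _ => hp.pow_nonneg _
  have habs : ∀ i, |x i| ≤ M := fun i => by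
    rw [← Real.pow_rpow_inv_natCast (abs_nonneg (x i)) hp0, hp.pow_abs]
    exact Real.rpow_le_rpow (hp.pow_nonneg _)
      (Finset.single_le_sum (fun j _ => hp.pow_nonneg (x j)) (Finset.mem_univ i)) (by positivity)
  calc ∑ i, x i ^ n ≤ ∑ i, M ^ (n - p) * x i ^ p := Finset.sum_le_sum fun i _ => by
        calc x i ^ n ≤ |x i| ^ n := by rw [← abs_pow]; exact le_abs_self _
          _ = |x i| ^ (n - p) * x i ^ p := by rw [← hp.pow_abs, ← pow_add, Nat.sub_add_cancel hpn]
          _ ≤ M ^ (n - p) * x i ^ p := by gcongr; exacts [hp.pow_nonneg _, habs i]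
    _ = M ^ (n - p) * M ^ p := by rw [← Finset.mul_sum, Real.rpow_inv_natCast_pow hsum hp0]
    _ = M ^ n := by rw [← pow_add, Nat.sub_add_cancel hpn]

theorem cycAdj_succ_iff {m : ℕ} (i j : Fin (m + 1)) :
    cycAdj (m + 1) i j ↔ j = i + 1 ∨ i = j + 1 := by
  simp [cycAdj, Fin.ext_iff, Fin.val_add, eq_comm]

theorem adjMat_isHermitian {V : Type*} [Fintype V] (H : V → V → Prop) [DecidableRel H]
    (hsym : ∀ a b, H a b → H b a) : (adjMat H).IsHermitian := by
  ext i j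
  simp only [conjTranspose_apply, adjMat, star_trivial]
  exact if_congr ⟨hsym j i, hsym i j⟩ rfl rfl

section CycleHomomorphisms

variable {V : Type*} [Fintype V] [DecidableEq V] (H : V → V → Prop) [DecidableRel H]

theorem homCount_cycAdj_succ_eq_card (hsym : ∀ a b, H a b → H b a) (m : ℕ) :
    HomCount (cycAdj (m + 1)) H = #{g : Fin (m + 1) → V | ∀ i, H (g i) (g (i + 1))} := by
  rw [HomCount, Fintype.card_subtype]
  congr 1
  ext g
  simp only [mem_filter, mem_univ, true_and, cycAdj_succ_iff]
  constructor
  · exact fun h i => h i _ (Or.inl rfl)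
  · rintro h a b (rfl | rfl)
    exacts [h a, hsym _ _ (h b)]

theorem homCount_cycAdj_succ_eq_trace (hsym : ∀ a b, H a b → H b a) (m : ℕ) :
    (HomCount (cycAdj (m + 1)) H : ℝ) = (adjMat H ^ (m + 1)).trace := by
  rw [homCount_cycAdj_succ_eq_card H hsym, trace_pow_succ_eq_sum_prod, Finset.card_filter]
  push_cast
  congr! with g
  simp only [adjMat, Fintype.prod_boole]
  congr

theorem homCount_cycAdj_eq_sum_eigenvalues_pow (hsym : ∀ a b, H a b → H b a) {k : ℕ}
    (hk : k ≠ 0) :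
    (HomCount (cycAdj k) H : ℝ) = ∑ i, (adjMat_isHermitian H hsym).eigenvalues i ^ k := by
  obtain ⟨m, rfl⟩ := Nat.exists_eq_succ_of_ne_zero hk
  rw [homCount_cycAdj_succ_eq_trace H hsym,
    (adjMat_isHermitian H hsym).trace_pow_eq_sum_eigenvalues_pow]
  rfl

end CycleHomomorphisms

theorem cycle_hom_max_three_four_general {V : Type*} [Fintype V] [DecidableEq V]
    (H : V → V → Prop) [DecidableRel H] (hsym : ∀ a b, H a b → H b a)
    (k : ℕ) (hk : 3 ≤ k) :
    (HomCount (cycAdj k) H : ℝ) ^ ((k : ℝ)⁻¹) ≤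
      max ((HomCount (cycAdj 3) H : ℝ) ^ ((3 : ℝ)⁻¹))
        ((HomCount (cycAdj 4) H : ℝ) ^ ((4 : ℝ)⁻¹)) := by
  rcases hk.eq_or_lt with rfl | hk4
  · exact le_max_left _ _
  refine le_max_of_le_right ?_
  set lam := (adjMat_isHermitian H hsym).eigenvalues
  have hcount : ∀ n ≠ 0, (HomCount (cycAdj n) H : ℝ) = ∑ i, lam i ^ n :=
    fun n hn => homCount_cycAdj_eq_sum_eigenvalues_pow H hsym hn
  have hk0 : k ≠ 0 := by omega
  calc (HomCount (cycAdj k) H : ℝ) ^ ((k : ℝ)⁻¹)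
      ≤ (((∑ i, lam i ^ 4) ^ ((4 : ℕ) : ℝ)⁻¹) ^ k) ^ ((k : ℝ)⁻¹) := by
        rw [hcount k hk0]
        gcongr
        · exact hcount k hk0 ▸ Nat.cast_nonneg _
        · exact sum_pow_le_sum_pow_rpow_inv_pow lam (by decide) (by decide) hk4
    _ = (HomCount (cycAdj 4) H : ℝ) ^ ((4 : ℝ)⁻¹) := by
        rw [Real.pow_rpow_inv_natCast (by positivity) hk0, hcount 4 (by decide)]
        norm_num

/-- for every `k ≥ 3`,
`hom(C_k,H)^{1/k} ≤ max{hom(C_3,H)^{1/3}, hom(C_4,H)^{1/4}}`. -/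
theorem cycle_hom_max_three_four {V : Type*} [Fintype V] [DecidableEq V]
    (H : V → V → Prop) [DecidableRel H] (hsym : ∀ a b, H a b → H b a)
    (hiso : ∀ v, ∃ w, H v w)
    (k : ℕ) (hk : 3 ≤ k) :
    (HomCount (cycAdj k) H : ℝ) ^ ((k : ℝ)⁻¹) ≤
      max ((HomCount (cycAdj 3) H : ℝ) ^ ((3 : ℝ)⁻¹))
        ((HomCount (cycAdj 4) H : ℝ) ^ ((4 : ℝ)⁻¹)) :=
  cycle_hom_max_three_four_general H hsym k hk
end

section
/- Let G be a graph on n vertices with minimum degree δ ≥ 1, where n ≥ 3δ − 2. Then every maximum matching of G has size at least δ. -/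
open Finset

/-- `M` is a matching in the simple graph `G`: a set of edges of `G` that are
pairwise vertex-disjoint. -/
def IsMatchingIn {U : Type*} (G : SimpleGraph U) (M : Finset (Sym2 U)) : Prop :=
  (∀ e ∈ M, e ∈ G.edgeSet) ∧
    ∀ e ∈ M, ∀ f ∈ M, e ≠ f → ∀ v : U, v ∈ e → v ∉ f

/-- `v` is unmatched by the matching `M` (not covered by any edge of `M`). -/
def UnmatchedBy {U : Type*} (M : Finset (Sym2 U)) (v : U) : Prop :=
  ∀ e ∈ M, v ∉ e

/-
Let `M` be a maximum matching and `I` the set of vertices it leaves unmatched. By maximality every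
neighbour of a vertex of `I` is matched, and for an edge `xy ∈ M` the vertices of `I` adjacent to
`x` and those adjacent to `y` cannot include two distinct vertices `u ~ x`, `v ~ y`, since `u x y v`
would be an augmenting path; so once `|I| ≥ 2`, at most `|I|` edges join `I` to `{x, y}`. Counting
the edges leaving `I` gives `δ |I| ≤ |M| |I|`, hence `δ ≤ |M|` whenever `|I| > |M|`. Otherwise
`n ≤ |I| + 2 |M| ≤ 3 |M|`, and `n ≥ 3δ - 2` gives `δ ≤ |M|` directly.
-/

def IsMaximumMatchingIn {U : Type*} (G : SimpleGraph U) (M : Finset (Sym2 U)) : Prop :=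
  IsMatchingIn G M ∧ ∀ M' : Finset (Sym2 U), IsMatchingIn G M' → #M' ≤ #M

section

variable {U : Type*} {G : SimpleGraph U} {M : Finset (Sym2 U)} {u v x y : U}

theorem IsMatchingIn.mono {M' : Finset (Sym2 U)} (hM : IsMatchingIn G M) (h : M' ⊆ M) :
    IsMatchingIn G M' :=
  ⟨fun e he => hM.1 e (h he), fun e he f hf => hM.2 e (h he) f (h hf)⟩

variable [DecidableEq U]

theorem unmatchedBy_iff_notMem_biUnion : UnmatchedBy M v ↔ v ∉ M.biUnion Sym2.toFinset := by
  simp [UnmatchedBy]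

theorem unmatchedBy_insert_iff :
    UnmatchedBy (insert s(x, y) M) v ↔ v ≠ x ∧ v ≠ y ∧ UnmatchedBy M v := by
  simp [UnmatchedBy, Sym2.mem_iff, and_assoc]

theorem UnmatchedBy.erase (hv : UnmatchedBy M v) (e : Sym2 U) : UnmatchedBy (M.erase e) v :=
  fun f hf => hv f (mem_of_mem_erase hf)

namespace IsMatchingIn

theorem unmatchedBy_erase {e : Sym2 U} (hM : IsMatchingIn G M) (he : e ∈ M) (hv : v ∈ e) :
    UnmatchedBy (M.erase e) v := fun f hf =>
  hM.2 e he f (mem_of_mem_erase hf) (ne_of_mem_erase hf).symm v hv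

theorem pairwiseDisjoint_toFinset (hM : IsMatchingIn G M) :
    (M : Set (Sym2 U)).PairwiseDisjoint Sym2.toFinset := fun e he f hf hef =>
  disjoint_left.mpr fun v hve hvf =>
    hM.2 e he f hf hef v (Sym2.mem_toFinset.mp hve) (Sym2.mem_toFinset.mp hvf)

theorem insert_edge (hM : IsMatchingIn G M) (hux : G.Adj u x) (hu : UnmatchedBy M u)
    (hx : UnmatchedBy M x) : IsMatchingIn G (insert s(u, x) M) := by
  have hnew : ∀ f ∈ M, ∀ w ∈ s(u, x), w ∉ f := by
    rintro f hf w hw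
    rcases Sym2.mem_iff.mp hw with rfl | rfl
    exacts [hu f hf, hx f hf]
  refine ⟨fun e he => ?_, fun e he f hf hef w hwe hwf => ?_⟩
  · rcases mem_insert.mp he with rfl | he
    exacts [hux, hM.1 e he]
  rcases mem_insert.mp he with rfl | he <;> rcases mem_insert.mp hf with rfl | hf
  · exact hef rfl
  · exact hnew f hf w hwe hwf
  · exact hnew e he w hwf hwe
  · exact hM.2 e he f hf hef w hwe hwf

/-- Switching along the augmenting path `u x y v`. -/
theorem augment (hM : IsMatchingIn G M) (he : s(x, y) ∈ M) (hux : G.Adj u x)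
    (hvy : G.Adj v y) (huv : u ≠ v) (hu : UnmatchedBy M u) (hv : UnmatchedBy M v) :
    IsMatchingIn G (insert s(u, x) (insert s(v, y) (M.erase s(x, y)))) := by
  have hM' := hM.mono (erase_subset s(x, y) M)
  have huy : u ≠ y := fun h => hu _ he (h ▸ Sym2.mem_mk_right x y)
  have hvx : v ≠ x := fun h => hv _ he (h ▸ Sym2.mem_mk_left x y)
  refine (hM'.insert_edge hvy (hv.erase _) (hM.unmatchedBy_erase he (Sym2.mem_mk_right x y))
    ).insert_edge hux ?_ ?_
  · exact unmatchedBy_insert_iff.mpr ⟨huv, huy, hu.erase _⟩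
  · exact unmatchedBy_insert_iff.mpr
      ⟨hvx.symm, G.ne_of_adj (hM.1 _ he), hM.unmatchedBy_erase he (Sym2.mem_mk_left x y)⟩

end IsMatchingIn

namespace IsMaximumMatchingIn

theorem not_adj (hM : IsMaximumMatchingIn G M) (hu : UnmatchedBy M u) (hx : UnmatchedBy M x) :
    ¬G.Adj u x := fun hux => by
  have hle := hM.2 _ (hM.1.insert_edge hux hu hx)
  rw [card_insert_of_notMem fun h => hu _ h (Sym2.mem_mk_left u x)] at hle
  omega

theorem eq_of_adj_of_adj (hM : IsMaximumMatchingIn G M) (he : s(x, y) ∈ M)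
    (hu : UnmatchedBy M u) (hv : UnmatchedBy M v) (hux : G.Adj u x) (hvy : G.Adj v y) :
    u = v := by
  by_contra huv
  have hle := hM.2 _ (hM.1.augment he hux hvy huv hu hv)
  have hvy_new : s(v, y) ∉ M.erase s(x, y) := fun h =>
    hv _ (mem_of_mem_erase h) (Sym2.mem_mk_left v y)
  have hux_new : s(u, x) ∉ insert s(v, y) (M.erase s(x, y)) := by
    rw [mem_insert, not_or]
    refine ⟨fun h => ?_, fun h => hu _ (mem_of_mem_erase h) (Sym2.mem_mk_left u x)⟩
    rcases Sym2.eq_iff.mp h with ⟨rfl, -⟩ | ⟨rfl, -⟩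
    · exact huv rfl
    · exact hu _ he (Sym2.mem_mk_right _ _)
  rw [card_insert_of_notMem hux_new, card_insert_of_notMem hvy_new, card_erase_of_mem he] at hle
  have := card_pos.mpr ⟨_, he⟩
  omega

variable [DecidableRel G.Adj]

theorem card_filter_adj_add_card_filter_adj_le (hM : IsMaximumMatchingIn G M)
    (he : s(x, y) ∈ M) {I : Finset U} (hI : ∀ u ∈ I, UnmatchedBy M u) (hI2 : 2 ≤ #I) :
    #{u ∈ I | G.Adj u x} + #{u ∈ I | G.Adj u y} ≤ #I := by
  obtain hA | ⟨a, ha⟩ := {u ∈ I | G.Adj u x}.eq_empty_or_nonempty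
  · simpa [hA] using card_filter_le I _
  obtain hB | ⟨b, hb⟩ := {u ∈ I | G.Adj u y}.eq_empty_or_nonempty
  · simpa [hB] using card_filter_le I _
  have hAB : ∀ u ∈ {u ∈ I | G.Adj u x}, ∀ v ∈ {u ∈ I | G.Adj u y}, u = v := by
    intro u hu v hv
    rw [mem_filter] at hu hv
    exact hM.eq_of_adj_of_adj he (hI u hu.1) (hI v hv.1) hu.2 hv.2
  have hA1 : #{u ∈ I | G.Adj u x} ≤ 1 :=
    card_le_one.mpr fun u hu u' hu' => (hAB u hu b hb).trans (hAB u' hu' b hb).symm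
  have hB1 : #{u ∈ I | G.Adj u y} ≤ 1 :=
    card_le_one.mpr fun v hv v' hv' => (hAB a ha v hv).symm.trans (hAB a ha v' hv')
  omega

variable [Fintype U]

theorem min_degree_le_card (hM : IsMaximumMatchingIn G M) {δ : ℕ}
    (hdeg : ∀ v, δ ≤ G.degree v) (hI : #M < #(univ \ M.biUnion Sym2.toFinset)) :
    δ ≤ #M := by
  set V := M.biUnion Sym2.toFinset
  set I := univ \ V
  have hIunm : ∀ u ∈ I, UnmatchedBy M u := fun u hu =>
    unmatchedBy_iff_notMem_biUnion.mpr (mem_sdiff.mp hu).2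
  have hdegI : ∀ u ∈ I, δ ≤ #(V.bipartiteAbove G.Adj u) := by
    intro u hu
    refine (hdeg u).trans ?_
    rw [← G.card_neighborFinset_eq_degree]
    refine card_le_card fun x hx => ?_
    have hux := (G.mem_neighborFinset u x).mp hx
    refine (mem_bipartiteAbove G.Adj).mpr ⟨?_, hux⟩
    by_contra hxV
    exact hM.not_adj (hIunm u hu) (unmatchedBy_iff_notMem_biUnion.mpr hxV) hux
  have hedge : ∀ e ∈ M, ∑ w ∈ e.toFinset, #(I.bipartiteBelow G.Adj w) ≤ #I := by
    intro e he
    induction e using Sym2.ind with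
    | _ x y =>
      have hI2 : 2 ≤ #I := by have := card_pos.mpr ⟨_, he⟩; omega
      rw [Sym2.toFinset_mk_eq, sum_pair (G.ne_of_adj (hM.1.1 _ he))]
      exact hM.card_filter_adj_add_card_filter_adj_le he hIunm hI2
  have hcount : δ * #I ≤ #M * #I :=
    calc δ * #I ≤ ∑ u ∈ I, #(V.bipartiteAbove G.Adj u) := by
          rw [mul_comm]; exact card_nsmul_le_sum I _ δ hdegI
      _ = ∑ w ∈ V, #(I.bipartiteBelow G.Adj w) :=
          sum_card_bipartiteAbove_eq_sum_card_bipartiteBelow G.Adj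
      _ = ∑ e ∈ M, ∑ w ∈ e.toFinset, #(I.bipartiteBelow G.Adj w) :=
          sum_biUnion hM.1.pairwiseDisjoint_toFinset
      _ ≤ #M * #I := by simpa using sum_le_card_nsmul M _ #I hedge
  exact Nat.le_of_mul_le_mul_right hcount (by omega)

end IsMaximumMatchingIn

end

theorem maximum_matching_size_ge_min_degree_general {U : Type*} [Fintype U] [DecidableEq U]
    (G : SimpleGraph U) [DecidableRel G.Adj]
    (δ : ℕ) (hdegG : ∀ v : U, δ ≤ G.degree v)
    (hn : 3 * δ ≤ Fintype.card U + 2)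
    (M : Finset (Sym2 U)) (hM : IsMatchingIn G M)
    (hmax : ∀ M' : Finset (Sym2 U), IsMatchingIn G M' → M'.card ≤ M.card) :
    δ ≤ M.card := by
  have hMax : IsMaximumMatchingIn G M := ⟨hM, hmax⟩
  by_cases hI : #M < #(univ \ M.biUnion Sym2.toFinset)
  · exact hMax.min_degree_le_card hdegG hI
  have hV : #(M.biUnion Sym2.toFinset) ≤ #M * 2 :=
    card_biUnion_le_card_mul M _ 2 fun e _ => by rw [Sym2.card_toFinset]; split <;> omega
  rw [card_univ_sdiff] at hI
  omega

/-- if `G` has `n` vertices, minimum degree `δ ≥ 1`, and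
`n ≥ 3δ − 2`, then every maximum matching of `G` has size at least `δ`. -/
theorem maximum_matching_size_ge_min_degree {U : Type*} [Fintype U] [DecidableEq U]
    (G : SimpleGraph U) [DecidableRel G.Adj]
    (δ : ℕ) (hδ : 1 ≤ δ) (hdegG : ∀ v : U, δ ≤ G.degree v)
    (hn : 3 * δ ≤ Fintype.card U + 2)
    (M : Finset (Sym2 U)) (hM : IsMatchingIn G M)
    (hmax : ∀ M' : Finset (Sym2 U), IsMatchingIn G M' → M'.card ≤ M.card) :
    δ ≤ M.card :=
  maximum_matching_size_ge_min_degree_general G δ hdegG hn M hM hmax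
end
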